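/- arXiv:2505.06992 — 7 statements merged into one kernel-verified Lean document; each statement's English description precedes it below -/
import Mathlib

section
/- For all integers m ≥ 0 and n ≥ 0, the binomial coefficient C(2n, m) equals the sum over k from 0 to n of 2^(m-2k) · C(n-k, m-2k) · C(n, k), where binomial coefficients with negative arguments are zero. -/
/-!
Compare coefficients of `x^m` in `(1 + x)^(2n) = (x^2 + (1 + 2x))^n`: expanding the right side
binomially, the term `C(n, k) x^(2k) (1 + 2x)^(n-k)` contributes `2^(m-2k) C(n-k, m-2k) C(n, k)`.
-/

open Polynomial

theorem coeff_one_add_C_mul_X_pow {R : Type*} [CommSemiring R] (r : R) (n k : ℕ) :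
    ((1 + C r * X) ^ n).coeff k = n.choose k * r ^ k := by
  rw [show (1 + C r * X) ^ n = ((1 + X) ^ n).comp (C r * X) by simp,
    comp_C_mul_X_coeff, coeff_one_add_X_pow]

/-- For all `m, n ≥ 0`:
`C(2n, m) = Σ_{k=0}^{n} 2^(m-2k) · C(n-k, m-2k) · C(n, k)`,
where a term is zero when `m - 2k < 0` (i.e. binomial coefficients with
negative arguments vanish). -/
theorem stmt0 (m n : ℕ) :
    (2 * n).choose m =
      ∑ k ∈ Finset.range (n + 1),
        if 2 * k ≤ m then 2 ^ (m - 2 * k) * (n - k).choose (m - 2 * k) * n.choose k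
        else 0 := by
  have hsq : (1 + X : ℕ[X]) ^ 2 = X ^ 2 + (1 + C 2 * X) := by
    rw [C_ofNat]; ring
  rw [← Nat.cast_id ((2 * n).choose m), ← coeff_one_add_X_pow, pow_mul, hsq, add_pow,
    finsetSum_coeff]
  refine Finset.sum_congr rfl fun k _ => ?_
  rw [← pow_mul, mul_comm, coeff_natCast_mul, coeff_X_pow_mul', mul_ite, mul_zero]
  simp only [coeff_one_add_C_mul_X_pow, Nat.cast_id]
  split_ifs <;> ring
end

section
/- For all integers m ≥ 0 and n ≥ 2, C(2n-4, m) = Σ_{k=2}^{n} 2^(m+4-2k) · C(n-k, m+4-2k) · C(n-2, k-2), where terms with negative binomial arguments are zero. -/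
/-!
Expand `(1 + X)^(2N) = (X^2 + (1 + 2X))^N` by the binomial theorem and compare the
coefficients of `X^m`; with `N = n - 2` and `k = j + 2` this is the stated identity.
-/

open Polynomial Finset

lemma Polynomial.coeff_C_mul_X_add_one_pow {R : Type*} [CommSemiring R] (a : R) (M t : ℕ) :
    ((C a * X + 1) ^ M).coeff t = M.choose t * a ^ t := by
  have hcomp : (C a * X + 1) ^ M = ((X + 1) ^ M).comp (C a * X) := by
    simp [pow_comp]
  rw [hcomp, comp_C_mul_X_coeff, coeff_X_add_one_pow]

lemma Polynomial.coeff_X_sq_add_pow {R : Type*} [CommSemiring R] (p : R[X]) (N m : ℕ) :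
    ((X ^ 2 + p) ^ N).coeff m =
      ∑ j ∈ range (N + 1),
        if 2 * j ≤ m then N.choose j * (p ^ (N - j)).coeff (m - 2 * j) else 0 := by
  rw [add_pow, finsetSum_coeff]
  refine sum_congr rfl fun j _ => ?_
  have hterm : (X ^ 2) ^ j * p ^ (N - j) * (N.choose j : R[X])
      = C (N.choose j : R) * p ^ (N - j) * X ^ (2 * j) := by
    rw [← pow_mul, map_natCast]; ring
  rw [hterm, coeff_mul_X_pow', coeff_C_mul]

lemma Nat.choose_two_mul_eq_sum (N m : ℕ) :
    (2 * N).choose m =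
      ∑ j ∈ range (N + 1),
        if 2 * j ≤ m then 2 ^ (m - 2 * j) * (N - j).choose (m - 2 * j) * N.choose j else 0 := by
  have hsq : (X + 1 : ℕ[X]) ^ (2 * N) = (X ^ 2 + (C 2 * X + 1)) ^ N := by
    rw [pow_mul, C_ofNat]; ring
  rw [← Nat.cast_id ((2 * N).choose m), ← coeff_X_add_one_pow, hsq, coeff_X_sq_add_pow]
  refine sum_congr rfl fun j _ => ?_
  simp only [coeff_C_mul_X_add_one_pow, Nat.cast_id]
  split_ifs <;> ring

/-- For all `m ≥ 0` and `n ≥ 2`: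
`C(2n-4, m) = Σ_{k=2}^{n} 2^(m+4-2k) · C(n-k, m+4-2k) · C(n-2, k-2)`,
where a term is zero when `m + 4 - 2k < 0`. -/
theorem stmt1 (m n : ℕ) (hn : 2 ≤ n) :
    (2 * n - 4).choose m =
      ∑ k ∈ Finset.Icc 2 n,
        if 2 * k ≤ m + 4 then
          2 ^ (m + 4 - 2 * k) * (n - k).choose (m + 4 - 2 * k) * (n - 2).choose (k - 2)
        else 0 := by
  obtain ⟨N, rfl⟩ := Nat.exists_eq_add_of_le' hn
  have hIcc : Icc 2 (N + 2) = Ico (0 + 2) (N + 1 + 2) := by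
    rw [zero_add, add_right_comm, Ico_add_one_right_eq_Icc]
  rw [hIcc, ← sum_Ico_add', ← range_eq_Ico, show 2 * (N + 2) - 4 = 2 * N by omega,
    Nat.choose_two_mul_eq_sum]
  refine sum_congr rfl fun j _ => ?_
  rw [show m + 4 - 2 * (j + 2) = m - 2 * j by omega, show N + 2 - (j + 2) = N - j by omega,
    Nat.add_sub_cancel, Nat.add_sub_cancel]
  simp only [show 2 * (j + 2) ≤ m + 4 ↔ 2 * j ≤ m by omega]
end

section
/- Let R = K[x_1,...,x_n, y_1,...,y_n] and let w_1,...,w_n be positive integers. Let I_{n-1} = (x_i y_j^{w_j} : 1 ≤ i,j ≤ n-1, i ≠ j), A = (y_1^{w_1},...,y_{n-1}^{w_{n-1}}), B = (x_1,...,x_{n-1}). Then the ideal intersection (I_{n-1} + x_n·A) ∩ y_n^{w_n}·B equals y_n^{w_n}·(I_{n-1} + (x_n x_1 y_1^{w_1}, ..., x_n x_{n-1} y_{n-1}^{w_{n-1}})). -/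
/-!
The generators of `J = I_{n-1} + x_n·A` do not involve `y_n`, so `y_n^{w_n}·g ∈ J` forces
`g ∈ J`, and the intersection is `y_n^{w_n}·(J ∩ B)`. Since `I_{n-1} ⊆ B`, the modular law gives
`J ∩ B = I_{n-1} + (x_n·A ∩ B)`. The ideals `x_n·A` and `B` are generated in disjoint sets of
variables, and the retraction setting `x_1, …, x_{n-1}` to zero shows `x_n·A ∩ B = x_n·A·B`.
Its generators `x_n x_i y_j^{w_j}` lie in `I_{n-1}` for `i ≠ j` and are the new generators of
the right-hand side for `i = j`.
-/

open MvPolynomial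

theorem Ideal.inf_span_singleton_mul_eq {R : Type*} [CommSemiring R] {J B : Ideal R} {m : R}
    (hJ : ∀ g, m * g ∈ J → g ∈ J) : J ⊓ span {m} * B = span {m} * (J ⊓ B) := by
  refine le_antisymm ?_ (le_inf (mul_le_right.trans inf_le_left) (mul_mono_right inf_le_right))
  rintro f ⟨hfJ, hfm⟩
  obtain ⟨b, hb, rfl⟩ := mem_span_singleton_mul.mp hfm
  exact mem_span_singleton_mul.mpr ⟨b, ⟨hJ b hfJ, hb⟩, rfl⟩

theorem Ideal.span_inf_le_span_mul_of_retraction {R : Type*} [CommRing R] {S : Set R}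
    {B : Ideal R} (π : R →+* R) (hS : ∀ s ∈ S, π s = s) (hB : B ≤ RingHom.ker π)
    (hπ : ∀ f, f - π f ∈ B) : span S ⊓ B ≤ span S * B := by
  rintro f ⟨hfS, hfB⟩
  obtain ⟨k, c, s, rfl⟩ := Submodule.mem_span_set'.mp hfS
  have hπf : π (∑ i, c i • (s i : R)) = ∑ i, π (c i) * s i := by
    simp [map_sum, hS _ (s _).2]
  have hf : ∑ i, c i • (s i : R) = ∑ i, (s i : R) * (c i - π (c i)) := by
    calc ∑ i, c i • (s i : R) = ∑ i, c i • (s i : R) - π (∑ i, c i • (s i : R)) := by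
          rw [hB hfB, sub_zero]
      _ = ∑ i, (s i : R) * (c i - π (c i)) := by
          rw [hπf, ← Finset.sum_sub_distrib]
          simp only [smul_eq_mul, mul_sub, mul_comm]
  rw [hf]
  exact sum_mem _ fun i _ => mul_mem_mul (subset_span (s i).2) (hπ _)

theorem MvPolynomial.sub_aeval_mem {R σ : Type*} [CommRing R] {B : Ideal (MvPolynomial σ R)}
    (φ : σ → MvPolynomial σ R) (hφ : ∀ u, X u - φ u ∈ B) (f : MvPolynomial σ R) :
    f - aeval φ f ∈ B := by
  have : (Ideal.Quotient.mkₐ R B).comp (aeval φ) = Ideal.Quotient.mkₐ R B :=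
    algHom_ext fun u => by simpa using (Ideal.Quotient.eq.mpr (hφ u)).symm
  exact Ideal.Quotient.eq.mp (AlgHom.congr_fun this f).symm

theorem MvPolynomial.mem_of_X_pow_mul_mem_span {R σ : Type*} [CommSemiring R]
    {S : Set (MvPolynomial σ R)} {v : σ} (hS : S ⊆ (fun t => monomial t 1) '' {t | t v = 0})
    {k : ℕ} {g : MvPolynomial σ R} (h : X v ^ k * g ∈ Ideal.span S) : g ∈ Ideal.span S := by
  have hST : S = (fun t => monomial t 1) '' {t | t v = 0 ∧ monomial t (1 : R) ∈ S} := by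
    ext s
    refine ⟨fun hs => ?_, ?_⟩
    · obtain ⟨t, ht, rfl⟩ := hS hs
      exact ⟨t, ⟨ht, hs⟩, rfl⟩
    · rintro ⟨t, ⟨-, ht⟩, rfl⟩
      exact ht
  rw [hST, mem_ideal_span_monomial_image] at h ⊢
  intro μ hμ
  obtain ⟨t, ht, hle⟩ := h (Finsupp.single v k + μ) <| by
    rwa [X_pow_eq_monomial, mem_support_iff, coeff_monomial_mul, one_mul, ← mem_support_iff]
  refine ⟨t, ht, fun u => ?_⟩
  by_cases hu : u = v
  · simp [hu, ht.1]
  · simpa [Finsupp.single_apply, Ne.symm hu] using hle u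

theorem MvPolynomial.X_mul_X_pow_mem_monomials {R σ : Type*} [CommSemiring R] {a b v : σ}
    (ha : a ≠ v) (hb : b ≠ v) (e : ℕ) :
    (X a * X b ^ e : MvPolynomial σ R) ∈ (fun t => monomial t 1) '' {t | t v = 0} :=
  ⟨Finsupp.single a 1 + Finsupp.single b e, by simp [ha, hb],
    by rw [X_pow_eq_monomial, X, monomial_mul, one_mul]⟩

namespace WeightedBipartite

open scoped Pointwise

variable (K : Type*) [CommRing K] {n : ℕ} (w : Fin (n + 1) → ℕ)

abbrev PolyRing (n : ℕ) := MvPolynomial (Fin (n + 1) ⊕ Fin (n + 1)) K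

noncomputable section

def I : Ideal (PolyRing K n) := Ideal.span {p | ∃ i j : Fin n, i ≠ j ∧
  p = X (Sum.inl i.castSucc) * X (Sum.inr j.castSucc) ^ w j.castSucc}

def A : Ideal (PolyRing K n) :=
  Ideal.span {p | ∃ j : Fin n, p = X (Sum.inr j.castSucc) ^ w j.castSucc}

variable (n) in
def B : Ideal (PolyRing K n) := Ideal.span {p | ∃ i : Fin n, p = X (Sum.inl i.castSucc)}

def C : Ideal (PolyRing K n) := I K w + Ideal.span {p | ∃ j : Fin n,
  p = X (Sum.inl (Fin.last n)) * X (Sum.inl j.castSucc) * X (Sum.inr j.castSucc) ^ w j.castSucc}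

def D : Ideal (PolyRing K n) := Ideal.span {X (Sum.inl (Fin.last n))} * A K w

end

variable {K}

lemma X_inl_castSucc_mem_B (i : Fin n) : X (Sum.inl i.castSucc) ∈ B K n :=
  Ideal.subset_span ⟨i, rfl⟩

lemma I_le_B : I K w ≤ B K n := by
  rw [I, Ideal.span_le]
  rintro _ ⟨i, j, -, rfl⟩
  exact Ideal.mul_mem_right _ _ (X_inl_castSucc_mem_B i)

lemma C_le_B : C K w ≤ B K n := by
  refine sup_le (I_le_B w) (Ideal.span_le.mpr ?_)
  rintro _ ⟨j, rfl⟩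
  rw [mul_right_comm]
  exact Ideal.mul_mem_left _ _ (X_inl_castSucc_mem_B j)

lemma C_le_I_add_D : C K w ≤ I K w + D K w := by
  refine sup_le_sup_left (Ideal.span_le.mpr ?_) _
  rintro _ ⟨j, rfl⟩
  rw [SetLike.mem_coe, D, Ideal.mem_span_singleton_mul]
  exact ⟨_, Ideal.mul_mem_left _ (X (Sum.inl j.castSucc)) (Ideal.subset_span ⟨j, rfl⟩), by ring⟩

lemma D_eq_span : D K w = Ideal.span (({X (Sum.inl (Fin.last n))} : Set (PolyRing K n)) *
      {p : PolyRing K n | ∃ j : Fin n, p = X (Sum.inr j.castSucc) ^ w j.castSucc}) :=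
  Ideal.span_mul_span' _ _

lemma D_mul_B_le_C : D K w * B K n ≤ C K w := by
  rw [D_eq_span, B, Ideal.span_mul_span', Ideal.span_le]
  rintro _ ⟨_, ⟨_, rfl, _, ⟨j, rfl⟩, rfl⟩, _, ⟨i, rfl⟩, rfl⟩
  rcases eq_or_ne i j with rfl | hij
  · exact Ideal.mem_sup_right (Ideal.subset_span ⟨i, by ring⟩)
  · refine Ideal.mem_sup_left ?_
    dsimp only
    rw [mul_assoc, mul_comm (X (Sum.inr _) ^ _)]
    exact Ideal.mul_mem_left _ _ (Ideal.subset_span ⟨i, j, hij, rfl⟩)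

lemma D_inf_B_le_D_mul_B : D K w ⊓ B K n ≤ D K w * B K n := by
  -- `aeval φ` sets `x_1, …, x_{n-1}` to zero and fixes the remaining variables.
  let φ : Fin (n + 1) ⊕ Fin (n + 1) → PolyRing K n :=
    Sum.elim (Fin.lastCases (X (Sum.inl (Fin.last n))) fun _ => 0) (X ∘ Sum.inr)
  rw [D_eq_span]
  refine Ideal.span_inf_le_span_mul_of_retraction (aeval φ).toRingHom ?_ ?_
    (sub_aeval_mem φ ?_)
  · rintro _ ⟨_, rfl, _, ⟨j, rfl⟩, rfl⟩
    simp [φ]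
  · rw [B, Ideal.span_le]
    rintro _ ⟨i, rfl⟩
    simp [φ]
  · rintro (i | j)
    · induction i using Fin.lastCases with
      | last => simp [φ]
      | cast i => simpa [φ] using X_inl_castSucc_mem_B i
    · simp [φ]

lemma I_add_D_inf_B : (I K w + D K w) ⊓ B K n = C K w := by
  refine le_antisymm ?_ (le_inf (C_le_I_add_D w) (C_le_B w))
  rw [Submodule.add_eq_sup, sup_inf_assoc_of_le _ (I_le_B w)]
  exact sup_le le_sup_left ((D_inf_B_le_D_mul_B w).trans (D_mul_B_le_C w))

lemma mem_of_X_inr_last_pow_mul_mem {k : ℕ} {g : PolyRing K n}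
    (h : X (Sum.inr (Fin.last n)) ^ k * g ∈ I K w + D K w) : g ∈ I K w + D K w := by
  rw [I, D_eq_span, Submodule.add_eq_sup, ← Ideal.span_union] at h ⊢
  refine mem_of_X_pow_mul_mem_span ?_ h
  rintro _ (⟨i, j, -, rfl⟩ | ⟨_, rfl, _, ⟨j, rfl⟩, rfl⟩) <;>
    exact X_mul_X_pow_mem_monomials (by simp) (by simp [Fin.castSucc_ne_last]) _

end WeightedBipartite

theorem stmt4_general {K : Type} [Field K] (n : ℕ) (w : Fin (n + 1) → ℕ)
    (I A B C : Ideal (MvPolynomial (Fin (n + 1) ⊕ Fin (n + 1)) K))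
    (hI : I = Ideal.span {p | ∃ i j : Fin n, i ≠ j ∧
      p = X (Sum.inl i.castSucc) * X (Sum.inr j.castSucc) ^ w j.castSucc})
    (hA : A = Ideal.span {p | ∃ j : Fin n, p = X (Sum.inr j.castSucc) ^ w j.castSucc})
    (hB : B = Ideal.span {p | ∃ i : Fin n, p = X (Sum.inl i.castSucc)})
    (hC : C = I + Ideal.span {p | ∃ j : Fin n,
      p = X (Sum.inl (Fin.last n)) * X (Sum.inl j.castSucc) *
        X (Sum.inr j.castSucc) ^ w j.castSucc}) :
    (I + Ideal.span {X (Sum.inl (Fin.last n))} * A) ⊓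
        (Ideal.span {X (Sum.inr (Fin.last n)) ^ w (Fin.last n)} * B) =
      Ideal.span {X (Sum.inr (Fin.last n)) ^ w (Fin.last n)} * C := by
  subst hI hA hB hC
  exact (Ideal.inf_span_singleton_mul_eq fun _ =>
    WeightedBipartite.mem_of_X_inr_last_pow_mul_mem w).trans
      (congrArg _ (WeightedBipartite.I_add_D_inf_B w))

/-- In `R = K[x_1,…,x_n, y_1,…,y_n]` (here `n` is `n+1`, variables indexed by
`Fin (n+1) ⊕ Fin (n+1)`, `x` on the left and `y` on the right), with weights `w`,
let `I_{n-1} = (x_i y_j^{w_j} : i ≠ j ≤ n-1)`, `A = (y_1^{w_1},…,y_{n-1}^{w_{n-1}})`,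
`B = (x_1,…,x_{n-1})`.  Then
`(I_{n-1} + x_n·A) ∩ y_n^{w_n}·B = y_n^{w_n}·(I_{n-1} + (x_n x_j y_j^{w_j} : j ≤ n-1))`. -/
theorem stmt4 {K : Type} [Field K] (n : ℕ) (w : Fin (n + 1) → ℕ) (hw : ∀ j, 1 ≤ w j)
    (I A B C : Ideal (MvPolynomial (Fin (n + 1) ⊕ Fin (n + 1)) K))
    (hI : I = Ideal.span {p | ∃ i j : Fin n, i ≠ j ∧
      p = X (Sum.inl i.castSucc) * X (Sum.inr j.castSucc) ^ w j.castSucc})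
    (hA : A = Ideal.span {p | ∃ j : Fin n, p = X (Sum.inr j.castSucc) ^ w j.castSucc})
    (hB : B = Ideal.span {p | ∃ i : Fin n, p = X (Sum.inl i.castSucc)})
    (hC : C = I + Ideal.span {p | ∃ j : Fin n,
      p = X (Sum.inl (Fin.last n)) * X (Sum.inl j.castSucc) *
        X (Sum.inr j.castSucc) ^ w j.castSucc}) :
    (I + Ideal.span {X (Sum.inl (Fin.last n))} * A) ⊓
        (Ideal.span {X (Sum.inr (Fin.last n)) ^ w (Fin.last n)} * B) =
      Ideal.span {X (Sum.inr (Fin.last n)) ^ w (Fin.last n)} * C :=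
  stmt4_general n w I A B C hI hA hB hC
end

section
/- Let R = K[x_1,...,x_n, y_1,...,y_n], w_1,...,w_n positive integers, and for 1 ≤ s ≤ n-1 let Q_{s-1} = I_{n-1} + (x_n x_1 y_1^{w_1}, ..., x_n x_{s-1} y_{s-1}^{w_{s-1}}), where I_{n-1} = (x_i y_j^{w_j} : 1 ≤ i,j ≤ n-1, i ≠ j). Then the colon ideal Q_{s-1} : (x_n x_s y_s^{w_s}) equals (x_1,...,x_{s-1}, x_{s+1},...,x_{n-1}, y_1^{w_1},...,y_{s-1}^{w_{s-1}}, y_{s+1}^{w_{s+1}},...,y_{n-1}^{w_{n-1}}). -/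
/-!
If a monomial ideal `J` is generated by monomials `m_g`, then `J : u` is generated by the
monomials `m_g / gcd(m_g, u)`. With `u = x_n x_s y_s^{w_s}`, the generators of `Q_{s-1}` give
`x_i` (from `x_i y_s^{w_s}`), `y_j^{w_j}` (from `x_s y_j^{w_j}`), and otherwise `x_i y_j^{w_j}` or
`x_j y_j^{w_j}` with `i, j ≠ s`, which are multiples of the former and hence redundant.
-/

open MvPolynomial Finsupp

namespace MvPolynomial

variable {σ R : Type*} [CommSemiring R]

theorem support_mul_monomial_one (p : MvPolynomial σ R) (u : σ →₀ ℕ) :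
    (p * monomial u 1).support = p.support.map (addRightEmbedding u) :=
  AddMonoidAlgebra.support_coeff_mul_single p _ (by simp) _

theorem span_monomial_image_colon_span_monomial (s : Set (σ →₀ ℕ)) (u : σ →₀ ℕ) :
    (Ideal.span ((monomial · (1 : R)) '' s)).colon
        ((Ideal.span {monomial u (1 : R)} : Ideal (MvPolynomial σ R)) : Set (MvPolynomial σ R)) =
      Ideal.span ((monomial · (1 : R)) '' ((· - u) '' s)) := by
  ext f
  rw [Ideal.mem_colon_span_singleton, mem_ideal_span_monomial_image,
    mem_ideal_span_monomial_image, support_mul_monomial_one]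
  simp [tsub_le_iff_right]

theorem span_monomial_image_mono {s t : Set (σ →₀ ℕ)}
    (h : ∀ a ∈ s, ∃ b ∈ t, b ≤ a) :
    Ideal.span ((monomial · (1 : R)) '' s) ≤ Ideal.span ((monomial · (1 : R)) '' t) := by
  rw [Ideal.span_le]
  rintro _ ⟨a, ha, rfl⟩
  rw [SetLike.mem_coe, mem_ideal_span_monomial_image]
  intro b hb
  rw [Finset.mem_singleton.mp (support_monomial_subset hb)]
  exact h a ha

end MvPolynomial

section

variable {n : ℕ} (w : Fin (n + 1) → ℕ) (s : Fin n)

/-- Exponent vectors of the generators of `Q_{s-1}`. Indices are shifted: `Sum.inl i` and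
`Sum.inr i` stand for `x_{i+1}` and `y_{i+1}`, and the paper's `n` is `n + 1` here, so
`Fin.last n` gives `x_n` and `Fin.castSucc` the indices below it. -/
noncomputable def qExponents : Set (Fin (n + 1) ⊕ Fin (n + 1) →₀ ℕ) :=
  {d | ∃ i j : Fin n, i ≠ j ∧
      d = single (Sum.inl i.castSucc) 1 + single (Sum.inr j.castSucc) (w j.castSucc)} ∪
    {d | ∃ j : Fin n, j < s ∧
      d = single (Sum.inl (Fin.last n)) 1 + single (Sum.inl j.castSucc) 1 +
        single (Sum.inr j.castSucc) (w j.castSucc)}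

noncomputable def uExponent : Fin (n + 1) ⊕ Fin (n + 1) →₀ ℕ :=
  single (Sum.inl (Fin.last n)) 1 + single (Sum.inl s.castSucc) 1 +
    single (Sum.inr s.castSucc) (w s.castSucc)

noncomputable def colonExponents : Set (Fin (n + 1) ⊕ Fin (n + 1) →₀ ℕ) :=
  {d | ∃ i : Fin n, i ≠ s ∧ d = single (Sum.inl i.castSucc) 1} ∪
    {d | ∃ j : Fin n, j ≠ s ∧ d = single (Sum.inr j.castSucc) (w j.castSucc)}

theorem image_monomial_qExponents (K : Type*) [CommSemiring K] :
    (monomial · (1 : K)) '' qExponents w s =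
      {p | ∃ i j : Fin n, i ≠ j ∧
        p = X (Sum.inl i.castSucc) * X (Sum.inr j.castSucc) ^ w j.castSucc} ∪
      {p | ∃ j : Fin n, j < s ∧
        p = X (Sum.inl (Fin.last n)) * X (Sum.inl j.castSucc) *
          X (Sum.inr j.castSucc) ^ w j.castSucc} := by
  simp only [qExponents, Set.image_union]
  congr 1 <;> ext p <;> simp [monomial_add_single, ← X_pow_eq_monomial, @eq_comm _ p]

theorem monomial_uExponent (K : Type*) [CommSemiring K] :
    monomial (uExponent w s) (1 : K) =
      X (Sum.inl (Fin.last n)) * X (Sum.inl s.castSucc) *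
        X (Sum.inr s.castSucc) ^ w s.castSucc := by
  simp [uExponent, monomial_add_single, ← X_pow_eq_monomial]

theorem image_monomial_colonExponents (K : Type*) [CommSemiring K] :
    (monomial · (1 : K)) '' colonExponents w s =
      {p | ∃ i : Fin n, i ≠ s ∧ p = X (Sum.inl i.castSucc)} ∪
        {p | ∃ j : Fin n, j ≠ s ∧ p = X (Sum.inr j.castSucc) ^ w j.castSucc} := by
  simp only [colonExponents, Set.image_union]
  congr 1 <;> ext p <;> simp [← X_pow_eq_monomial, @eq_comm _ p]

variable {w s}

theorem uExponent_inl_castSucc {i : Fin n} (hi : i ≠ s) :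
    uExponent w s (Sum.inl i.castSucc) = 0 := by
  simp [uExponent, Fin.castSucc_ne_last, Ne.symm hi]

theorem uExponent_inr_castSucc {j : Fin n} (hj : j ≠ s) :
    uExponent w s (Sum.inr j.castSucc) = 0 := by
  simp [uExponent, Ne.symm hj]

theorem exists_colonExponents_le_tsub_uExponent
    {d : Fin (n + 1) ⊕ Fin (n + 1) →₀ ℕ} (hd : d ∈ qExponents w s) :
    ∃ e ∈ colonExponents w s, e ≤ d - uExponent w s := by
  rcases hd with ⟨i, j, hij, rfl⟩ | ⟨j, hjs, rfl⟩
  · by_cases his : i = s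
    · have hjs : j ≠ s := his ▸ hij.symm
      refine ⟨_, Or.inr ⟨j, hjs, rfl⟩, ?_⟩
      simp [single_le_iff, uExponent_inr_castSucc hjs]
    · refine ⟨_, Or.inl ⟨i, his, rfl⟩, ?_⟩
      simp [single_le_iff, uExponent_inl_castSucc his]
  · refine ⟨_, Or.inl ⟨j, hjs.ne, rfl⟩, ?_⟩
    simp [single_le_iff, uExponent_inl_castSucc hjs.ne, Fin.castSucc_ne_last]

theorem exists_qExponents_tsub_uExponent_le
    {e : Fin (n + 1) ⊕ Fin (n + 1) →₀ ℕ} (he : e ∈ colonExponents w s) :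
    ∃ d ∈ qExponents w s, d - uExponent w s ≤ e := by
  simp_rw [tsub_le_iff_right]
  rcases he with ⟨i, his, rfl⟩ | ⟨j, hjs, rfl⟩
  · exact ⟨_, Or.inl ⟨i, s, his, rfl⟩, add_le_add_right le_add_self _⟩
  · refine ⟨_, Or.inl ⟨s, j, Ne.symm hjs, rfl⟩, ?_⟩
    rw [add_comm (single _ _)]
    exact add_le_add_right (le_add_self.trans le_self_add) _

end

theorem stmt5_general {K : Type} [Field K] (n : ℕ) (w : Fin (n + 1) → ℕ)
    (s : Fin n) (I Q : Ideal (MvPolynomial (Fin (n + 1) ⊕ Fin (n + 1)) K))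
    (hI : I = Ideal.span {p | ∃ i j : Fin n, i ≠ j ∧
      p = X (Sum.inl i.castSucc) * X (Sum.inr j.castSucc) ^ w j.castSucc})
    (hQ : Q = I + Ideal.span {p | ∃ j : Fin n, j < s ∧
      p = X (Sum.inl (Fin.last n)) * X (Sum.inl j.castSucc) *
        X (Sum.inr j.castSucc) ^ w j.castSucc}) :
    Q.colon ((Ideal.span {X (Sum.inl (Fin.last n)) * X (Sum.inl s.castSucc) *
        X (Sum.inr s.castSucc) ^ w s.castSucc} :
          Ideal (MvPolynomial (Fin (n + 1) ⊕ Fin (n + 1)) K)) :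
            Set (MvPolynomial (Fin (n + 1) ⊕ Fin (n + 1)) K)) =
      Ideal.span ({p | ∃ i : Fin n, i ≠ s ∧ p = X (Sum.inl i.castSucc)} ∪
        {p | ∃ j : Fin n, j ≠ s ∧ p = X (Sum.inr j.castSucc) ^ w j.castSucc}) := by
  subst hI hQ
  rw [Ideal.add_eq_sup, ← Ideal.span_union, ← image_monomial_qExponents,
    ← monomial_uExponent, span_monomial_image_colon_span_monomial,
    ← image_monomial_colonExponents]
  refine le_antisymm (span_monomial_image_mono ?_) (span_monomial_image_mono ?_)
  · rintro _ ⟨d, hd, rfl⟩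
    exact exists_colonExponents_le_tsub_uExponent hd
  · intro e he
    obtain ⟨d, hd, hde⟩ := exists_qExponents_tsub_uExponent_le he
    exact ⟨_, ⟨d, hd, rfl⟩, hde⟩

/-- In `R = K[x_1,…,x_n, y_1,…,y_n]` (variables indexed by `Fin (n+1) ⊕ Fin (n+1)`),
with `Q_{s-1} = I_{n-1} + (x_n x_1 y_1^{w_1},…,x_n x_{s-1} y_{s-1}^{w_{s-1}})`, the colon
ideal `Q_{s-1} : (x_n x_s y_s^{w_s})` equals
`(x_i : i ≤ n-1, i ≠ s) + (y_j^{w_j} : j ≤ n-1, j ≠ s)`. -/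
theorem stmt5 {K : Type} [Field K] (n : ℕ) (w : Fin (n + 1) → ℕ) (hw : ∀ j, 1 ≤ w j)
    (s : Fin n) (I Q : Ideal (MvPolynomial (Fin (n + 1) ⊕ Fin (n + 1)) K))
    (hI : I = Ideal.span {p | ∃ i j : Fin n, i ≠ j ∧
      p = X (Sum.inl i.castSucc) * X (Sum.inr j.castSucc) ^ w j.castSucc})
    (hQ : Q = I + Ideal.span {p | ∃ j : Fin n, j < s ∧
      p = X (Sum.inl (Fin.last n)) * X (Sum.inl j.castSucc) *
        X (Sum.inr j.castSucc) ^ w j.castSucc}) :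
    Q.colon ((Ideal.span {X (Sum.inl (Fin.last n)) * X (Sum.inl s.castSucc) *
        X (Sum.inr s.castSucc) ^ w s.castSucc} :
          Ideal (MvPolynomial (Fin (n + 1) ⊕ Fin (n + 1)) K)) :
            Set (MvPolynomial (Fin (n + 1) ⊕ Fin (n + 1)) K)) =
      Ideal.span ({p | ∃ i : Fin n, i ≠ s ∧ p = X (Sum.inl i.castSucc)} ∪
        {p | ∃ j : Fin n, j ≠ s ∧ p = X (Sum.inr j.castSucc) ^ w j.castSucc}) :=
  stmt5_general n w s I Q hI hQ
end

section
/- In the polynomial ring R = K[x_1,...,x_s, y_1,...,y_s] with positive integer weights w_1,...,w_s, the edge ideal I_s = (x_i y_j^{w_j} : 1 ≤ i,j ≤ s, i ≠ j) of the weighted oriented crown graph satisfies I_s : x_s = (y_1^{w_1},...,y_{s-1}^{w_{s-1}}, x_1 y_s^{w_s}, ..., x_{s-1} y_s^{w_s}) for all s ≥ 3. -/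
open MvPolynomial

/-- If every generator of `S` avoids the variable `v` (is in the image of
`rename Subtype.val` from polynomials in the other variables), then
`f * X v ∈ span S` implies `f ∈ span S`. -/
lemma keyA {K : Type} [Field K] {σ : Type} [DecidableEq σ] (v : σ)
    (S : Set (MvPolynomial σ K))
    (hS : ∀ g ∈ S, ∃ g₀ : MvPolynomial {u : σ // u ≠ v} K,
      MvPolynomial.rename Subtype.val g₀ = g)
    (f : MvPolynomial σ K) (hf : f * X v ∈ Ideal.span S) :
    f ∈ Ideal.span S := by
  classical
  set A := MvPolynomial {u : σ // u ≠ v} K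
  set e : Option {u : σ // u ≠ v} ≃ σ := Equiv.optionSubtypeNe v with he
  set φ : MvPolynomial σ K ≃ₐ[K] Polynomial A :=
    (renameEquiv K e.symm).trans (optionEquivLeft K _) with hφ
  have hφX : φ (X v) = Polynomial.X := by
    have hv : e.symm v = none := Equiv.optionSubtypeNe_symm_self v
    rw [hφ]
    simp only [AlgEquiv.trans_apply, renameEquiv_apply, rename_X, hv]
    exact optionEquivLeft_X_none K {u : σ // u ≠ v}
  have hφC : ∀ g₀ : A, φ (rename Subtype.val g₀) = Polynomial.C g₀ := by
    have : (φ.toAlgHom.comp (rename (R := K) (Subtype.val : {u : σ // u ≠ v} → σ)))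
        = Polynomial.CAlgHom := by
      apply MvPolynomial.algHom_ext
      intro u
      have hu : e.symm u.val = some u := Equiv.optionSubtypeNe_symm_of_ne u.2
      rw [hφ]
      show (optionEquivLeft K {u : σ // u ≠ v}) ((renameEquiv K e.symm) ((rename Subtype.val) (X u))) = Polynomial.C (X u)
      rw [rename_X, renameEquiv_apply, rename_X, hu]
      exact optionEquivLeft_X_some K {u : σ // u ≠ v} u
    intro g₀
    exact congrArg (fun ψ => ψ g₀) this
  set S₀ : Set A := {g₀ | rename Subtype.val g₀ ∈ S} with hS₀
  have himg : rename (Subtype.val : {u : σ // u ≠ v} → σ) '' S₀ = S := by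
    apply Set.Subset.antisymm
    · rintro g ⟨g₀, hg₀, rfl⟩; exact hg₀
    · intro g hg
      obtain ⟨g₀, hg₀⟩ := hS g hg
      exact ⟨g₀, by show rename Subtype.val g₀ ∈ S; rw [hg₀]; exact hg, hg₀⟩
  have hmap : Ideal.map (φ : MvPolynomial σ K →+* Polynomial A) (Ideal.span S)
      = Ideal.map (Polynomial.C : A →+* Polynomial A) (Ideal.span S₀) := by
    rw [Ideal.map_span, Ideal.map_span, ← himg, ← Set.image_comp]
    congr 1
    apply Set.image_congr
    intro g₀ _
    exact hφC g₀
  have hmem : φ (f * X v) ∈ Ideal.map (Polynomial.C : A →+* Polynomial A) (Ideal.span S₀) := by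
    rw [← hmap]
    exact Ideal.mem_map_of_mem _ hf
  rw [map_mul, hφX] at hmem
  have hcoeff : ∀ n, (φ f).coeff n ∈ Ideal.span S₀ := by
    intro n
    have := Ideal.mem_map_C_iff.mp hmem (n + 1)
    rwa [Polynomial.coeff_mul_X] at this
  have hφf : φ f ∈ Ideal.map (φ : MvPolynomial σ K →+* Polynomial A) (Ideal.span S) := by
    rw [hmap]
    exact Ideal.mem_map_C_iff.mpr hcoeff
  have := Ideal.comap_map_of_bijective (φ : MvPolynomial σ K →+* Polynomial A)
    φ.bijective (I := Ideal.span S)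
  rw [← this]
  exact hφf

/-- In `R = K[x_1,…,x_s, y_1,…,y_s]` (here `s` is `s+1`, variables indexed by
`Fin (s+1) ⊕ Fin (s+1)`), for `s ≥ 3` the edge ideal
`I_s = (x_i y_j^{w_j} : i ≠ j)` of the weighted oriented crown graph satisfies
`I_s : x_s = (y_1^{w_1},…,y_{s-1}^{w_{s-1}}, x_1 y_s^{w_s},…,x_{s-1} y_s^{w_s})`. -/
theorem stmt8 {K : Type} [Field K] (s : ℕ) (hs : 3 ≤ s + 1)
    (w : Fin (s + 1) → ℕ) (hw : ∀ j, 1 ≤ w j)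
    (I : Ideal (MvPolynomial (Fin (s + 1) ⊕ Fin (s + 1)) K))
    (hI : I = Ideal.span {p | ∃ i j : Fin (s + 1), i ≠ j ∧
      p = X (Sum.inl i) * X (Sum.inr j) ^ w j}) :
    I.colon (↑(Ideal.span {X (Sum.inl (Fin.last s))} :
      Ideal (MvPolynomial (Fin (s + 1) ⊕ Fin (s + 1)) K))) =
      Ideal.span ({p | ∃ j : Fin s, p = X (Sum.inr j.castSucc) ^ w j.castSucc} ∪
        {p | ∃ i : Fin s,
          p = X (Sum.inl i.castSucc) * X (Sum.inr (Fin.last s)) ^ w (Fin.last s)}) := by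
  classical
  set v : Fin (s + 1) ⊕ Fin (s + 1) := Sum.inl (Fin.last s) with hv
  set JS : Set (MvPolynomial (Fin (s + 1) ⊕ Fin (s + 1)) K) :=
    ({p | ∃ j : Fin s, p = X (Sum.inr j.castSucc) ^ w j.castSucc} ∪
      {p | ∃ i : Fin s,
        p = X (Sum.inl i.castSucc) * X (Sum.inr (Fin.last s)) ^ w (Fin.last s)}) with hJS
  apply le_antisymm
  · -- colon ≤ span JS
    intro f hf
    rw [Ideal.mem_colon_span_singleton] at hf
    -- I ≤ span JS
    have hIJ : I ≤ Ideal.span JS := by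
      rw [hI, Ideal.span_le]
      rintro p ⟨i, j, hij, rfl⟩
      by_cases hj : j = Fin.last s
      · subst hj
        obtain ⟨i', rfl⟩ := Fin.exists_castSucc_eq.mpr hij
        exact Ideal.subset_span (Or.inr ⟨i', rfl⟩)
      · obtain ⟨j', rfl⟩ := Fin.exists_castSucc_eq.mpr hj
        exact Ideal.mul_mem_left _ _ (Ideal.subset_span (Or.inl ⟨j', rfl⟩))
    have hfJ : f * X v ∈ Ideal.span JS := hIJ hf
    refine keyA v JS ?_ f hfJ
    rintro g (⟨j, rfl⟩ | ⟨i, rfl⟩)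
    · refine ⟨(X ⟨Sum.inr j.castSucc, by simp [hv]⟩ : MvPolynomial _ K) ^ w j.castSucc, ?_⟩
      rw [map_pow, rename_X]
    · have hne : (Sum.inl i.castSucc : Fin (s + 1) ⊕ Fin (s + 1)) ≠ v := by
        simp only [hv, ne_eq, Sum.inl.injEq]
        exact (Fin.castSucc_lt_last i).ne
      refine ⟨(X ⟨Sum.inl i.castSucc, hne⟩ : MvPolynomial _ K) *
        X ⟨Sum.inr (Fin.last s), by simp [hv]⟩ ^ w (Fin.last s), ?_⟩
      rw [map_mul, map_pow, rename_X, rename_X]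
  · -- span JS ≤ colon
    rw [Ideal.span_le]
    rintro g (⟨j, rfl⟩ | ⟨i, rfl⟩) <;> rw [SetLike.mem_coe, Ideal.mem_colon_span_singleton, hI]
    · rw [mul_comm]
      exact Ideal.subset_span ⟨Fin.last s, j.castSucc, (Fin.castSucc_lt_last j).ne', rfl⟩
    · exact Ideal.mul_mem_right _ _
        (Ideal.subset_span ⟨i.castSucc, Fin.last s, (Fin.castSucc_lt_last i).ne, rfl⟩)
end

section
/- Let I = J + K be a Betti splitting of monomial ideals. Then reg(I) = max{reg(J), reg(K), reg(J∩K) − 1}. -/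
/-!
The regularity is the largest value of `|a| - i` over the Betti support
`{(i, a) | β_{i,a} ≠ 0}`. A Betti splitting makes the support of `I` the union of the supports
of `J` and `L` and of the support of `J ∩ L` moved up one homological degree, which lowers
`|a| - i` by one; the greatest element of a union is the maximum of the greatest elements.
-/

open MvPolynomial

/-- A (multigraded) minimal free resolution of an ideal `I ⊆ K[x_v : v ∈ σ]`,
recorded through the ranks `rk i` of its free modules, the multidegrees
`deg i j` of their basis elements, the augmentation `aug : F₀ → R` (whose image
is `I`) and the differentials `d i : F_{i+1} → F_i`, given by matrices. -/
structure MinFreeRes {K : Type} [Field K] {σ : Type} (I : Ideal (MvPolynomial σ K)) where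
  rk : ℕ → ℕ
  deg : (i : ℕ) → Fin (rk i) → (σ →₀ ℕ)
  aug : (Fin (rk 0) → MvPolynomial σ K) →ₗ[MvPolynomial σ K] MvPolynomial σ K
  d : (i : ℕ) → Matrix (Fin (rk i)) (Fin (rk (i + 1))) (MvPolynomial σ K)
  aug_homog : ∀ j, (aug (Pi.single j 1)).support ⊆ {deg 0 j}
  d_homog : ∀ i j k, ∀ m ∈ (d i j k).support, deg i j + m = deg (i + 1) k
  minimal : ∀ i j k, MvPolynomial.coeff (0 : σ →₀ ℕ) (d i j k) = 0
  range_aug : ∀ p, p ∈ LinearMap.range aug ↔ p ∈ I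
  exact_zero : LinearMap.range (Matrix.mulVecLin (d 0)) = LinearMap.ker aug
  exact_succ : ∀ i,
    LinearMap.range (Matrix.mulVecLin (d (i + 1))) = LinearMap.ker (Matrix.mulVecLin (d i))

/-- The multigraded Betti number `β_{i,a}(I)`: the number of basis elements of the
`i`-th free module in the minimal free resolution with multidegree `a`. -/
noncomputable def MinFreeRes.cnt {K : Type} [Field K] {σ : Type}
    {I : Ideal (MvPolynomial σ K)} (F : MinFreeRes I) (i : ℕ) (a : σ →₀ ℕ) : ℕ :=
  Nat.card {j : Fin (F.rk i) // F.deg i j = a}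

/-- `F` witnesses that `pdim I = p`. -/
def MinFreeRes.IsPdim {K : Type} [Field K] {σ : Type}
    {I : Ideal (MvPolynomial σ K)} (F : MinFreeRes I) (p : ℕ) : Prop :=
  F.rk p ≠ 0 ∧ ∀ i, p < i → F.rk i = 0

/-- `F` witnesses that `reg I = r`, i.e. `r = max { |a| - i : β_{i,a}(I) ≠ 0 }`. -/
def MinFreeRes.IsReg {K : Type} [Field K] {σ : Type}
    {I : Ideal (MvPolynomial σ K)} (F : MinFreeRes I) (r : ℤ) : Prop :=
  (∃ i j, ((F.deg i j).sum fun _ e => e : ℤ) - i = r) ∧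
    ∀ i j, ((F.deg i j).sum fun _ e => e : ℤ) - i ≤ r

/-- `I` is a monomial ideal. -/
def IsMonomialIdeal {K : Type} [Field K] {σ : Type} (I : Ideal (MvPolynomial σ K)) : Prop :=
  ∃ S : Set (σ →₀ ℕ), I = Ideal.span ((fun a => monomial a (1 : K)) '' S)

namespace MinFreeRes

variable {K : Type} [Field K] {σ : Type} {I : Ideal (MvPolynomial σ K)}

def bettiSupport (F : MinFreeRes I) : Set (ℕ × (σ →₀ ℕ)) := {p | F.cnt p.1 p.2 ≠ 0}

def regDegree (p : ℕ × (σ →₀ ℕ)) : ℤ := (p.2.sum fun _ e => e : ℤ) - p.1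

lemma mem_bettiSupport_iff (F : MinFreeRes I) {i : ℕ} {a : σ →₀ ℕ} :
    (i, a) ∈ F.bettiSupport ↔ ∃ j, F.deg i j = a := by
  simp only [bettiSupport, cnt, Set.mem_ofPred_eq, Nat.card_ne_zero, nonempty_subtype]
  exact ⟨fun h => h.1, fun h => ⟨h, inferInstance⟩⟩

lemma isReg_iff_isGreatest (F : MinFreeRes I) (r : ℤ) :
    F.IsReg r ↔ IsGreatest (regDegree '' F.bettiSupport) r := by
  constructor
  · rintro ⟨⟨i, j, hr⟩, hle⟩
    refine ⟨⟨(i, F.deg i j), F.mem_bettiSupport_iff.2 ⟨j, rfl⟩, hr⟩, ?_⟩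
    rintro _ ⟨⟨i, a⟩, ha, rfl⟩
    obtain ⟨j, rfl⟩ := F.mem_bettiSupport_iff.1 ha
    exact hle i j
  · rintro ⟨⟨⟨i, a⟩, ha, hr⟩, hle⟩
    obtain ⟨j, rfl⟩ := F.mem_bettiSupport_iff.1 ha
    exact ⟨⟨i, j, hr⟩, fun i j => hle ⟨(i, _), F.mem_bettiSupport_iff.2 ⟨j, rfl⟩, rfl⟩⟩

variable {J L M : Ideal (MvPolynomial σ K)}

lemma bettiSupport_eq_of_split (FI : MinFreeRes I) (FJ : MinFreeRes J) (FL : MinFreeRes L)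
    (FM : MinFreeRes M) (split0 : ∀ a, FI.cnt 0 a = FJ.cnt 0 a + FL.cnt 0 a)
    (split : ∀ i a, FI.cnt (i + 1) a = FJ.cnt (i + 1) a + FL.cnt (i + 1) a + FM.cnt i a) :
    FI.bettiSupport =
      FJ.bettiSupport ∪ (FL.bettiSupport ∪ Prod.map Nat.succ id '' FM.bettiSupport) := by
  ext ⟨i, a⟩
  simp only [bettiSupport, Set.mem_union, Set.mem_image, Set.mem_ofPred_eq, Prod.exists,
    Prod.map, Prod.mk.injEq, id]
  cases i with
  | zero =>
    simp only [split0, Nat.succ_ne_zero, false_and, and_false, exists_false, or_false]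
    omega
  | succ i =>
    simp only [split, Nat.succ_inj, exists_eq_right_right, exists_eq_right]
    omega

lemma regDegree_image_shift (S : Set (ℕ × (σ →₀ ℕ))) :
    regDegree '' (Prod.map Nat.succ id '' S) = (· - 1) '' (regDegree '' S) := by
  rw [Set.image_image, Set.image_image]
  refine Set.image_congr fun p _ => ?_
  simp only [regDegree, Prod.map_fst, Prod.map_snd, id_eq, Nat.cast_succ]
  ring

end MinFreeRes

open MinFreeRes in
theorem stmt11_general {K : Type} [Field K] {σ : Type} (I J L : Ideal (MvPolynomial σ K))
    (FI : MinFreeRes I) (FJ : MinFreeRes J) (FL : MinFreeRes L) (FJL : MinFreeRes (J ⊓ L))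
    (split0 : ∀ a, FI.cnt 0 a = FJ.cnt 0 a + FL.cnt 0 a)
    (split : ∀ i a, FI.cnt (i + 1) a = FJ.cnt (i + 1) a + FL.cnt (i + 1) a + FJL.cnt i a)
    (rJ rL rJL : ℤ) (hrJ : FJ.IsReg rJ) (hrL : FL.IsReg rL) (hrJL : FJL.IsReg rJL) :
    FI.IsReg (max rJ (max rL (rJL - 1))) := by
  rw [isReg_iff_isGreatest] at hrJ hrL hrJL ⊢
  have hshift : IsGreatest ((· - 1) '' (regDegree '' FJL.bettiSupport)) (rJL - 1) :=
    Monotone.map_isGreatest (fun _ _ h => sub_le_sub_right h 1) hrJL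
  rw [bettiSupport_eq_of_split FI FJ FL FJL split0 split, Set.image_union, Set.image_union,
    regDegree_image_shift]
  exact hrJ.union (hrL.union hshift)

/-- If `I = J + L` is a Betti splitting, then
`reg I = max { reg J, reg L, reg (J ∩ L) - 1 }`. -/
theorem stmt11 {K : Type} [Field K] {σ : Type} (I J L : Ideal (MvPolynomial σ K))
    (hIJL : I = J + L)
    (FI : MinFreeRes I) (FJ : MinFreeRes J) (FL : MinFreeRes L) (FJL : MinFreeRes (J ⊓ L))
    (split0 : ∀ a, FI.cnt 0 a = FJ.cnt 0 a + FL.cnt 0 a)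
    (split : ∀ i a, FI.cnt (i + 1) a = FJ.cnt (i + 1) a + FL.cnt (i + 1) a + FJL.cnt i a)
    (rJ rL rJL : ℤ) (hrJ : FJ.IsReg rJ) (hrL : FL.IsReg rL) (hrJL : FJL.IsReg rJL) :
    FI.IsReg (max rJ (max rL (rJL - 1))) :=
  stmt11_general I J L FI FJ FL FJL split0 split rJ rL rJL hrJ hrL hrJL
end

section
/- Let H be an induced subgraph of a weighted oriented graph D, with I(H) and I(D) their edge ideals in the polynomial ring R = K[x_v : v ∈ V(D)]. Then for every multidegree a ∈ ℕ^{V(D)} with supp(a) ⊆ V(H), and all i ≥ 0, β_{i,a}(I(H)) = β_{i,a}(I(D)). -/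
open MvPolynomial

/-!
Both Betti numbers are counted on the multidegree-`a` basis elements of minimal resolutions.
Since every weight is positive, a generator `x_u x_v^{w v}` of `I(D)` dividing `x^a` has
`u, v ∈ supp a ⊆ W`, so `I(H)` and `I(D)` contain the same polynomials whose monomials all
divide `x^a`. Lifting homogeneously, column by column, gives comparison maps between the two
resolutions that commute with the differentials on all basis elements of multidegree `≤ a`.
There the composite `F(H) → F(D) → F(H)` is homotopic to the identity, and minimality (no
constant terms in the differentials) forces its constant part to be the identity. So the
constant parts of the comparison maps restricted to multidegree `a` are `K`-matrices with
`P Q = 1`, and by symmetry the two counts agree.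
-/

open MvPolynomial Matrix

namespace MvPolynomial

variable {σ R : Type*} [CommSemiring R]

/-- `p` is homogeneous of multidegree `c - e`, where `p ≠ 0` forces `e ≤ c`. -/
def MapsDegree (e c : σ →₀ ℕ) (p : MvPolynomial σ R) : Prop := ∀ m ∈ p.support, e + m = c

namespace MapsDegree
variable {e e' c : σ →₀ ℕ} {p q : MvPolynomial σ R}

lemma zero : MapsDegree e c (0 : MvPolynomial σ R) := by simp [MapsDegree]

lemma add (hp : MapsDegree e c p) (hq : MapsDegree e c q) : MapsDegree e c (p + q) := by
  classical
  exact fun m hm => (Finset.mem_union.mp (support_add hm)).elim (hp m) (hq m)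

lemma sum {ι : Type*} {s : Finset ι} {f : ι → MvPolynomial σ R}
    (h : ∀ i ∈ s, MapsDegree e c (f i)) : MapsDegree e c (∑ i ∈ s, f i) :=
  Finset.sum_induction f _ (fun _ _ => add) zero h

lemma mul (hp : MapsDegree e e' p) (hq : MapsDegree e' c q) : MapsDegree e c (p * q) := by
  classical
  intro m hm
  obtain ⟨m₁, hm₁, m₂, hm₂, rfl⟩ := Finset.mem_add.mp (support_mul p q hm)
  rw [← add_assoc, hp m₁ hm₁, hq m₂ hm₂]

lemma one : MapsDegree e e (1 : MvPolynomial σ R) := by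
  classical
  intro m hm
  rw [mem_support_iff, coeff_one] at hm
  obtain rfl : 0 = m := by_contra fun h => hm (if_neg h)
  exact add_zero e

lemma le (hp : MapsDegree e c p) (h : p ≠ 0) : e ≤ c := by
  obtain ⟨m, hm⟩ := support_nonempty.mpr h
  exact le_iff_exists_add.mpr ⟨m, (hp m hm).symm⟩

lemma eq_of_constantCoeff_ne_zero (hp : MapsDegree e c p) (h : constantCoeff p ≠ 0) :
    e = c := by
  simpa using hp 0 (mem_support_iff.mpr (by rwa [← constantCoeff_eq]))

end MapsDegree

lemma MapsDegree.sub {R : Type*} [CommRing R] {e c : σ →₀ ℕ} {p q : MvPolynomial σ R}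
    (hp : MapsDegree e c p) (hq : MapsDegree e c q) : MapsDegree e c (p - q) := by
  classical
  intro m hm
  exact (Finset.mem_union.mp (support_sub σ p q hm)).elim (hp m) (hq m)

noncomputable def degreePart (e c : σ →₀ ℕ) : MvPolynomial σ R →ₗ[R] MvPolynomial σ R :=
  if e ≤ c then monomial (c - e) ∘ₗ lcoeff R (c - e) else 0

lemma coeff_degreePart [DecidableEq σ] (e c n : σ →₀ ℕ) (p : MvPolynomial σ R) :
    coeff n (degreePart e c p) = if e + n = c then coeff n p else 0 := by
  unfold degreePart
  split_ifs with hle hn hn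
  · simp [coeff_monomial, ← hn]
  · have : c - e ≠ n := fun h => hn (by rw [← h, add_tsub_cancel_of_le hle])
    simp [coeff_monomial, this]
  · exact absurd (hn ▸ le_self_add) hle
  · simp

lemma mapsDegree_degreePart (e c : σ →₀ ℕ) (p : MvPolynomial σ R) :
    MapsDegree e c (degreePart e c p) := by
  classical
  intro m hm
  rw [mem_support_iff, coeff_degreePart] at hm
  by_contra h
  exact hm (if_neg h)

lemma MapsDegree.degreePart_eq {e c : σ →₀ ℕ} {p : MvPolynomial σ R} (hp : MapsDegree e c p) :
    degreePart e c p = p := by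
  classical
  ext n
  rw [coeff_degreePart]
  split_ifs with h
  · rfl
  · by_contra hn
    exact h (hp n (mem_support_iff.mpr (Ne.symm hn)))

lemma degreePart_monomial_mul {e e' c m : σ →₀ ℕ} (he : e + m = e') (r : R)
    (q : MvPolynomial σ R) :
    degreePart e c (monomial m r * q) = monomial m r * degreePart e' c q := by
  classical
  ext n
  rw [coeff_degreePart, coeff_monomial_mul', coeff_monomial_mul']
  by_cases hmn : m ≤ n
  · rw [if_pos hmn, if_pos hmn, coeff_degreePart, ← he, add_assoc, add_tsub_cancel_of_le hmn]
    split_ifs <;> simp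
  · simp [hmn]

lemma MapsDegree.degreePart_mul {e e' c : σ →₀ ℕ} {p : MvPolynomial σ R}
    (hp : MapsDegree e e' p) (q : MvPolynomial σ R) :
    degreePart e c (p * q) = p * degreePart e' c q := by
  conv_lhs => rw [p.as_sum, Finset.sum_mul, map_sum]
  conv_rhs => rw [p.as_sum, Finset.sum_mul]
  exact Finset.sum_congr rfl fun m hm => degreePart_monomial_mul (hp m hm) _ _

end MvPolynomial

namespace Ideal

variable {σ R : Type*} [CommSemiring R]

def AgreeBelow (I J : Ideal (MvPolynomial σ R)) (a : σ →₀ ℕ) : Prop :=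
  ∀ p : MvPolynomial σ R, (∀ m ∈ p.support, m ≤ a) → (p ∈ I ↔ p ∈ J)

lemma AgreeBelow.symm {I J : Ideal (MvPolynomial σ R)} {a : σ →₀ ℕ} (h : AgreeBelow I J a) :
    AgreeBelow J I a :=
  fun p hp => (h p hp).symm

end Ideal

namespace Matrix

lemma card_le_of_mul_eq_one {K m n : Type*} [Field K] [Fintype m] [Fintype n]
    [DecidableEq m] {P : Matrix m n K} {Q : Matrix n m K} (h : P * Q = 1) :
    Fintype.card m ≤ Fintype.card n :=
  calc Fintype.card m = (P * Q).rank := by rw [h, rank_one]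
    _ ≤ P.rank := rank_mul_le_left P Q
    _ ≤ Fintype.card n := rank_le_card_width P

variable {σ R : Type*} [CommSemiring R] {l m n o : Type*}

lemma submatrix_mul_submatrix_subtype {l' n' : Type*} [Fintype m] {p : m → Prop}
    [DecidablePred p] (A : Matrix l m R) (B : Matrix m n R) (r : l' → l) (c : n' → n)
    (hB : ∀ k j, B k (c j) ≠ 0 → p k) :
    A.submatrix r (Subtype.val : {k // p k} → m) * B.submatrix Subtype.val c =
      (A * B).submatrix r c := by
  ext i j
  change ∑ k : {k // p k}, A (r i) k * B k (c j) = ∑ k, A (r i) k * B k (c j)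
  rw [← Finset.sum_subtype (Finset.univ.filter p) (by simp) fun k => A (r i) k * B k (c j),
    Finset.sum_filter_of_ne fun k _ hk => hB k j (right_ne_zero_of_mul hk)]

lemma mul_eq_zero_of_range_eq_ker [Fintype m] [Fintype n] [DecidableEq n]
    {M : Matrix m n R} {N : Matrix l m R}
    (h : LinearMap.range M.mulVecLin = LinearMap.ker N.mulVecLin) : N * M = 0 := by
  have hcol : ∀ j, M.col j ∈ LinearMap.ker N.mulVecLin := fun j =>
    h ▸ ⟨Pi.single j 1, by simp⟩
  ext i j
  exact congrFun (hcol j) i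

lemma col_mem_range_of_range_eq_ker [Fintype m] [Fintype n]
    {M : Matrix m n R} {N : Matrix l m R} {T : Matrix m o R}
    (h : LinearMap.range M.mulVecLin = LinearMap.ker N.mulVecLin) {t : o}
    (hT : (N * T).col t = 0) : T.col t ∈ LinearMap.range M.mulVecLin := by
  rw [h]
  exact hT

/-- `M` is the matrix of a degree-preserving map from the free module with basis degrees `dc`
to the one with basis degrees `dr`. -/
def IsGraded (dr : l → σ →₀ ℕ) (dc : n → σ →₀ ℕ) (M : Matrix l n (MvPolynomial σ R)) : Prop :=
  ∀ i j, MapsDegree (dr i) (dc j) (M i j)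

lemma IsGraded.mul [Fintype m] {d₁ : l → σ →₀ ℕ} {d₂ : m → σ →₀ ℕ} {d₃ : n → σ →₀ ℕ}
    {A : Matrix l m (MvPolynomial σ R)} {B : Matrix m n (MvPolynomial σ R)}
    (hA : IsGraded d₁ d₂ A) (hB : IsGraded d₂ d₃ B) : IsGraded d₁ d₃ (A * B) :=
  fun i j => MapsDegree.sum fun k _ => (hA i k).mul (hB k j)

lemma isGraded_one [DecidableEq n] (d : n → σ →₀ ℕ) :
    IsGraded d d (1 : Matrix n n (MvPolynomial σ R)) := by
  intro i j
  by_cases h : i = j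
  · subst h; simpa using MapsDegree.one
  · simpa [one_apply_ne h] using MapsDegree.zero

lemma IsGraded.sub {R : Type*} [CommRing R] {dr : l → σ →₀ ℕ} {dc : n → σ →₀ ℕ}
    {A B : Matrix l n (MvPolynomial σ R)} (hA : IsGraded dr dc A) (hB : IsGraded dr dc B) :
    IsGraded dr dc (A - B) :=
  fun i j => (hA i j).sub (hB i j)

lemma exists_mapsDegree_mulVec_eq [Fintype n] {dr : l → σ →₀ ℕ} {dc : n → σ →₀ ℕ}
    {M : Matrix l n (MvPolynomial σ R)} (hM : IsGraded dr dc M) {c : σ →₀ ℕ}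
    {v : l → MvPolynomial σ R} (hv : ∀ i, MapsDegree (dr i) c (v i))
    (hmem : v ∈ LinearMap.range M.mulVecLin) :
    ∃ u : n → MvPolynomial σ R, (∀ j, MapsDegree (dc j) c (u j)) ∧ M *ᵥ u = v := by
  obtain ⟨w, rfl⟩ := hmem
  refine ⟨fun j => degreePart (dc j) c (w j), fun j => mapsDegree_degreePart _ _ _, ?_⟩
  funext i
  calc ∑ j, M i j * degreePart (dc j) c (w j)
      = ∑ j, degreePart (dr i) c (M i j * w j) := by simp only [(hM i _).degreePart_mul]
    _ = degreePart (dr i) c ((M *ᵥ w) i) := (map_sum _ _ _).symm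
    _ = (M *ᵥ w) i := (hv i).degreePart_eq

def EqOnColsLE {α : Type*} (d : n → σ →₀ ℕ) (a : σ →₀ ℕ) (A B : Matrix m n α) : Prop :=
  ∀ i j, d j ≤ a → A i j = B i j

lemma EqOnColsLE.mul_left [Fintype m] {d : n → σ →₀ ℕ} {a : σ →₀ ℕ}
    {B B' : Matrix m n (MvPolynomial σ R)} (h : EqOnColsLE d a B B')
    (A : Matrix l m (MvPolynomial σ R)) : EqOnColsLE d a (A * B) (A * B') := by
  intro i j hj
  simp only [mul_apply, h _ j hj]

lemma EqOnColsLE.mul_right [Fintype m] {d₂ : m → σ →₀ ℕ} {d₃ : n → σ →₀ ℕ} {a : σ →₀ ℕ}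
    {A A' : Matrix l m (MvPolynomial σ R)} {B : Matrix m n (MvPolynomial σ R)}
    (h : EqOnColsLE d₂ a A A') (hB : IsGraded d₂ d₃ B) : EqOnColsLE d₃ a (A * B) (A' * B) := by
  intro i j hj
  refine Finset.sum_congr rfl fun k _ => ?_
  show A i k * B k j = A' i k * B k j
  by_cases hB0 : B k j = 0
  · simp [hB0]
  · rw [h i k (((hB k j).le hB0).trans hj)]

open Classical in
noncomputable def gradedLift [Fintype n] (dc : n → σ →₀ ℕ) (dt : o → σ →₀ ℕ)
    (M : Matrix l n (MvPolynomial σ R)) (T : Matrix l o (MvPolynomial σ R)) :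
    Matrix n o (MvPolynomial σ R) :=
  of fun j t => if h : ∃ u : n → MvPolynomial σ R,
      (∀ j, MapsDegree (dc j) (dt t) (u j)) ∧ M *ᵥ u = T.col t then h.choose j else 0

variable [Fintype n] {dr : l → σ →₀ ℕ} {dc : n → σ →₀ ℕ} {dt : o → σ →₀ ℕ}
  {M : Matrix l n (MvPolynomial σ R)} {T : Matrix l o (MvPolynomial σ R)}

lemma isGraded_gradedLift : IsGraded dc dt (gradedLift dc dt M T) := by
  intro j t
  simp only [gradedLift, of_apply]
  split_ifs with h
  · exact h.choose_spec.1 j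
  · exact MapsDegree.zero

lemma eqOnColsLE_mul_gradedLift {a : σ →₀ ℕ} (hM : IsGraded dr dc M) (hT : IsGraded dr dt T)
    (hrange : ∀ t, dt t ≤ a → T.col t ∈ LinearMap.range M.mulVecLin) :
    EqOnColsLE dt a (M * gradedLift dc dt M T) T := by
  intro i t ht
  have hex := exists_mapsDegree_mulVec_eq (v := T.col t) hM (fun i => hT i t) (hrange t ht)
  have hcol : (gradedLift dc dt M T).col t = hex.choose := by
    ext j
    simp only [gradedLift, col_apply, of_apply, dif_pos hex]
  calc (M * gradedLift dc dt M T) i t = (M *ᵥ (gradedLift dc dt M T).col t) i := rfl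
    _ = T i t := by rw [hcol, hex.choose_spec.2, col_apply]

lemma eqOnColsLE_mul_gradedLift_of_exact [Fintype l] {k : Type*} {a : σ →₀ ℕ}
    {N : Matrix k l (MvPolynomial σ R)}
    (hex : LinearMap.range M.mulVecLin = LinearMap.ker N.mulVecLin)
    (hM : IsGraded dr dc M) (hT : IsGraded dr dt T) (hNT : EqOnColsLE dt a (N * T) 0) :
    EqOnColsLE dt a (M * gradedLift dc dt M T) T :=
  eqOnColsLE_mul_gradedLift hM hT fun t ht =>
    col_mem_range_of_range_eq_ker hex (funext fun i => hNT i t ht)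

end Matrix

namespace MinFreeRes

variable {σ K : Type} [Field K] {I J : Ideal (MvPolynomial σ K)}

section Basic
variable (F : MinFreeRes I)

noncomputable def augRow : Matrix (Fin 1) (Fin (F.rk 0)) (MvPolynomial σ K) :=
  of fun _ k => F.aug (Pi.single k 1)

lemma augRow_mulVec (x : Fin (F.rk 0) → MvPolynomial σ K) :
    F.augRow *ᵥ x = fun _ => F.aug x := by
  funext
  rw [F.aug.pi_apply_eq_sum_univ x]
  simp only [mulVec, dotProduct, augRow, of_apply, smul_eq_mul]
  refine Finset.sum_congr rfl fun k _ => ?_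
  rw [mul_comm]
  congr 2
  funext j
  simp [Pi.single_apply, eq_comm]

lemma isGraded_augRow : IsGraded 0 (F.deg 0) F.augRow := fun _ k m hm => by
  simpa using F.aug_homog k hm

lemma isGraded_d (i : ℕ) : IsGraded (F.deg i) (F.deg (i + 1)) (F.d i) := F.d_homog i

lemma range_d_zero :
    LinearMap.range (F.d 0).mulVecLin = LinearMap.ker F.augRow.mulVecLin := by
  rw [F.exact_zero]
  ext x
  simp [augRow_mulVec, funext_iff]

lemma augRow_mul_d_zero : F.augRow * F.d 0 = 0 := mul_eq_zero_of_range_eq_ker F.range_d_zero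

lemma d_mul_d (i : ℕ) : F.d i * F.d (i + 1) = 0 := mul_eq_zero_of_range_eq_ker (F.exact_succ i)

lemma map_d_constantCoeff (i : ℕ) : (F.d i).map constantCoeff = 0 := by
  ext j k
  simpa [constantCoeff_eq] using F.minimal i j k

lemma constantCoeff_d_mul_apply {i : ℕ} {n : Type*} [Fintype n]
    (A : Matrix (Fin (F.rk (i + 1))) n (MvPolynomial σ K)) (l : Fin (F.rk i)) (j : n) :
    constantCoeff ((F.d i * A) l j) = 0 := by
  rw [← Matrix.map_apply (f := constantCoeff), Matrix.map_mul, F.map_d_constantCoeff,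
    Matrix.zero_mul, Matrix.zero_apply]

lemma constantCoeff_mul_d_apply {i : ℕ} {n : Type*} [Fintype n]
    (A : Matrix n (Fin (F.rk i)) (MvPolynomial σ K)) (l : n) (j : Fin (F.rk (i + 1))) :
    constantCoeff ((A * F.d i) l j) = 0 := by
  rw [← Matrix.map_apply (f := constantCoeff), Matrix.map_mul, F.map_d_constantCoeff,
    Matrix.mul_zero, Matrix.zero_apply]

lemma aug_single_mem_of_agreeBelow {a : σ →₀ ℕ} (h : Ideal.AgreeBelow I J a)
    {k : Fin (F.rk 0)} (hk : F.deg 0 k ≤ a) : F.aug (Pi.single k 1) ∈ J := by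
  refine (h _ fun m hm => ?_).mp ((F.range_aug _).mp ⟨_, rfl⟩)
  rw [Finset.mem_singleton.mp (F.aug_homog k hm)]
  exact hk

end Basic

/-- A graded chain map `F → G` over the identity of the polynomial ring, required to commute
with the differentials only on the basis elements of multidegree `≤ a`. -/
structure IsChainMapLE (F : MinFreeRes I) (G : MinFreeRes J) (a : σ →₀ ℕ)
    (φ : ∀ i, Matrix (Fin (G.rk i)) (Fin (F.rk i)) (MvPolynomial σ K)) : Prop where
  isGraded : ∀ i, IsGraded (G.deg i) (F.deg i) (φ i)
  augRow_mul : EqOnColsLE (F.deg 0) a (G.augRow * φ 0) F.augRow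
  d_mul : ∀ i, EqOnColsLE (F.deg (i + 1)) a (G.d i * φ (i + 1)) (φ i * F.d i)

lemma IsChainMapLE.comp {F : MinFreeRes I} {G : MinFreeRes J} {a : σ →₀ ℕ}
    {φ : ∀ i, Matrix (Fin (G.rk i)) (Fin (F.rk i)) (MvPolynomial σ K)}
    {ψ : ∀ i, Matrix (Fin (F.rk i)) (Fin (G.rk i)) (MvPolynomial σ K)}
    (hψ : IsChainMapLE G F a ψ) (hφ : IsChainMapLE F G a φ) :
    IsChainMapLE F F a fun i => ψ i * φ i where
  isGraded i := (hψ.isGraded i).mul (hφ.isGraded i)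
  augRow_mul l k hk := by
    rw [← Matrix.mul_assoc, hψ.augRow_mul.mul_right (hφ.isGraded 0) l k hk,
      hφ.augRow_mul l k hk]
  d_mul i l j hj := by
    rw [← Matrix.mul_assoc, (hψ.d_mul i).mul_right (hφ.isGraded (i + 1)) l j hj,
      Matrix.mul_assoc, (hφ.d_mul i).mul_left (ψ i) l j hj, Matrix.mul_assoc]

noncomputable def comparisonMap (F : MinFreeRes I) (G : MinFreeRes J) :
    ∀ i, Matrix (Fin (G.rk i)) (Fin (F.rk i)) (MvPolynomial σ K)
  | 0 => gradedLift (G.deg 0) (F.deg 0) G.augRow F.augRow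
  | i + 1 => gradedLift (G.deg (i + 1)) (F.deg (i + 1)) (G.d i) (comparisonMap F G i * F.d i)

lemma isChainMapLE_comparisonMap (F : MinFreeRes I) (G : MinFreeRes J) {a : σ →₀ ℕ}
    (hIJ : ∀ k, F.deg 0 k ≤ a → F.aug (Pi.single k 1) ∈ J) :
    IsChainMapLE F G a (comparisonMap F G) := by
  have hgr : ∀ i, IsGraded (G.deg i) (F.deg i) (comparisonMap F G i) := by
    rintro (_ | _) <;> exact isGraded_gradedLift
  have haug : EqOnColsLE (F.deg 0) a (G.augRow * comparisonMap F G 0) F.augRow :=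
    eqOnColsLE_mul_gradedLift G.isGraded_augRow F.isGraded_augRow fun k hk => by
      obtain ⟨x, hx⟩ := (G.range_aug _).mpr (hIJ k hk)
      exact ⟨x, by rw [mulVecLin_apply, augRow_mulVec, hx]; rfl⟩
  refine ⟨hgr, haug, fun i => ?_⟩
  induction i with
  | zero =>
    refine eqOnColsLE_mul_gradedLift_of_exact G.range_d_zero (G.isGraded_d 0)
      ((hgr 0).mul (F.isGraded_d 0)) fun l j hj => ?_
    rw [← Matrix.mul_assoc, (haug.mul_right (F.isGraded_d 0)) l j hj, F.augRow_mul_d_zero]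
  | succ i ih =>
    refine eqOnColsLE_mul_gradedLift_of_exact (G.exact_succ i) (G.isGraded_d (i + 1))
      ((hgr (i + 1)).mul (F.isGraded_d (i + 1))) fun l j hj => ?_
    rw [← Matrix.mul_assoc, (ih.mul_right (F.isGraded_d (i + 1))) l j hj, Matrix.mul_assoc,
      F.d_mul_d, Matrix.mul_zero]

section Homotopy
variable (F : MinFreeRes I) (α : ∀ i, Matrix (Fin (F.rk i)) (Fin (F.rk i)) (MvPolynomial σ K))

noncomputable def homotopy : ∀ i, Matrix (Fin (F.rk (i + 1))) (Fin (F.rk i)) (MvPolynomial σ K)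
  | 0 => gradedLift (F.deg 1) (F.deg 0) (F.d 0) (α 0 - 1)
  | i + 1 => gradedLift (F.deg (i + 2)) (F.deg (i + 1)) (F.d (i + 1))
      (α (i + 1) - 1 - homotopy i * F.d i)

lemma isGraded_homotopy (i : ℕ) : IsGraded (F.deg (i + 1)) (F.deg i) (F.homotopy α i) := by
  cases i <;> exact isGraded_gradedLift

variable {F α} {a : σ →₀ ℕ} (hα : IsChainMapLE F F a α)
include hα

lemma d_mul_homotopy_zero : EqOnColsLE (F.deg 0) a (F.d 0 * F.homotopy α 0) (α 0 - 1) :=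
  eqOnColsLE_mul_gradedLift_of_exact F.range_d_zero (F.isGraded_d 0)
    ((hα.isGraded 0).sub (isGraded_one _)) fun l j hj => by
      rw [Matrix.mul_sub, Matrix.sub_apply, hα.augRow_mul l j hj, Matrix.mul_one, sub_self,
        Matrix.zero_apply]

lemma d_mul_homotopy_succ_of (i : ℕ)
    (hi : EqOnColsLE (F.deg (i + 1)) a (F.d i * F.homotopy α i * F.d i) ((α i - 1) * F.d i)) :
    EqOnColsLE (F.deg (i + 1)) a (F.d (i + 1) * F.homotopy α (i + 1))
      (α (i + 1) - 1 - F.homotopy α i * F.d i) :=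
  eqOnColsLE_mul_gradedLift_of_exact (F.exact_succ i) (F.isGraded_d (i + 1))
    (((hα.isGraded _).sub (isGraded_one _)).sub
      ((F.isGraded_homotopy α i).mul (F.isGraded_d i))) fun l j hj => by
      simp only [Matrix.mul_sub, Matrix.sub_apply, Matrix.mul_one, ← Matrix.mul_assoc]
      rw [hα.d_mul i l j hj, hi l j hj, Matrix.sub_mul, Matrix.one_mul, Matrix.sub_apply,
        Matrix.zero_apply]
      ring

lemma d_mul_homotopy_mul_d :
    ∀ i, EqOnColsLE (F.deg (i + 1)) a (F.d i * F.homotopy α i * F.d i) ((α i - 1) * F.d i)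
  | 0 => (d_mul_homotopy_zero hα).mul_right (F.isGraded_d 0)
  | i + 1 => fun l j hj => by
    rw [((d_mul_homotopy_succ_of hα i (d_mul_homotopy_mul_d i)).mul_right
      (F.isGraded_d (i + 1))) l j hj, Matrix.sub_mul (α (i + 1) - 1), Matrix.mul_assoc,
      F.d_mul_d, Matrix.mul_zero, sub_zero]

end Homotopy

lemma IsChainMapLE.map_constantCoeff_eqOnColsLE_one {F : MinFreeRes I} {a : σ →₀ ℕ}
    {α : ∀ i, Matrix (Fin (F.rk i)) (Fin (F.rk i)) (MvPolynomial σ K)}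
    (hα : IsChainMapLE F F a α) (i : ℕ) :
    EqOnColsLE (F.deg i) a ((α i).map constantCoeff) 1 := by
  intro l j hj
  rw [← Matrix.map_one constantCoeff (map_zero _) (map_one _), Matrix.map_apply,
    Matrix.map_apply]
  cases i with
  | zero =>
    rw [← sub_eq_zero, ← map_sub, ← Matrix.sub_apply, ← d_mul_homotopy_zero hα l j hj,
      constantCoeff_d_mul_apply]
  | succ i =>
    have h := d_mul_homotopy_succ_of hα i (d_mul_homotopy_mul_d hα i) l j hj
    rw [Matrix.sub_apply, eq_sub_iff_add_eq, Matrix.sub_apply, eq_sub_iff_add_eq] at h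
    rw [← h, map_add, map_add, constantCoeff_d_mul_apply, constantCoeff_mul_d_apply, zero_add,
      zero_add]

lemma cnt_le_of_agreeBelow (F : MinFreeRes I) (G : MinFreeRes J) {a : σ →₀ ℕ}
    (h : Ideal.AgreeBelow I J a) (i : ℕ) : F.cnt i a ≤ G.cnt i a := by
  classical
  have hφ := isChainMapLE_comparisonMap F G fun _ => F.aug_single_mem_of_agreeBelow h
  have hψ := isChainMapLE_comparisonMap G F fun _ => G.aug_single_mem_of_agreeBelow h.symm
  have hid := (hψ.comp hφ).map_constantCoeff_eqOnColsLE_one i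
  have hPQ : ((comparisonMap G F i).map constantCoeff).submatrix
        (Subtype.val : {j // F.deg i j = a} → _) (Subtype.val : {j // G.deg i j = a} → _) *
      ((comparisonMap F G i).map constantCoeff).submatrix Subtype.val Subtype.val =
        (1 : Matrix {j // F.deg i j = a} {j // F.deg i j = a} K) := by
    rw [submatrix_mul_submatrix_subtype _ _ _ _ fun m k hm =>
        (((hφ.isGraded i) m k.1).eq_of_constantCoeff_ne_zero hm).trans k.2,
      ← Matrix.map_mul, ← submatrix_one _ Subtype.val_injective]
    ext k k'
    exact hid k k' k'.2.le
  simpa [cnt, Nat.card_eq_fintype_card] using card_le_of_mul_eq_one hPQ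

theorem cnt_eq_of_agreeBelow (F : MinFreeRes I) (G : MinFreeRes J) {a : σ →₀ ℕ}
    (h : Ideal.AgreeBelow I J a) (i : ℕ) : F.cnt i a = G.cnt i a :=
  (cnt_le_of_agreeBelow F G h i).antisymm (cnt_le_of_agreeBelow G F h.symm i)

end MinFreeRes

section EdgeIdeals
variable {V R : Type*} [CommSemiring R]

lemma X_mul_X_pow_eq_monomial (u v : V) (k : ℕ) :
    (X u * X v ^ k : MvPolynomial V R) =
      monomial (Finsupp.single u 1 + Finsupp.single v k) 1 := by
  rw [X_pow_eq_monomial, X, monomial_mul, one_mul]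

lemma mem_span_edgeMonomials_iff (S : Set (V × V)) (w : V → ℕ) (p : MvPolynomial V R) :
    p ∈ Ideal.span {p | ∃ e ∈ S, p = X e.1 * X e.2 ^ w e.2} ↔
      ∀ m ∈ p.support, ∃ e ∈ S, Finsupp.single e.1 1 + Finsupp.single e.2 (w e.2) ≤ m := by
  have hgen : {p : MvPolynomial V R | ∃ e ∈ S, p = X e.1 * X e.2 ^ w e.2} =
      (fun s => monomial s 1) ''
        ((fun e => Finsupp.single e.1 1 + Finsupp.single e.2 (w e.2)) '' S) := by
    ext p
    simp [X_mul_X_pow_eq_monomial, eq_comm]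
  rw [hgen, mem_ideal_span_monomial_image]
  simp only [Set.exists_mem_image]

lemma agreeBelow_span_induced_edges (E : Set (V × V)) {w : V → ℕ} (hw : ∀ v, 1 ≤ w v)
    {W : Set V} {a : V →₀ ℕ} (ha : ∀ v, a v ≠ 0 → v ∈ W) :
    Ideal.AgreeBelow
      (Ideal.span {p : MvPolynomial V R | ∃ e ∈ E, e.1 ∈ W ∧ e.2 ∈ W ∧
        p = X e.1 * X e.2 ^ w e.2})
      (Ideal.span {p | ∃ e ∈ E, p = X e.1 * X e.2 ^ w e.2}) a := by
  intro p hp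
  have hgen : {p : MvPolynomial V R | ∃ e ∈ E, e.1 ∈ W ∧ e.2 ∈ W ∧ p = X e.1 * X e.2 ^ w e.2} =
      {p | ∃ e ∈ {e ∈ E | e.1 ∈ W ∧ e.2 ∈ W}, p = X e.1 * X e.2 ^ w e.2} := by
    ext p
    simp only [Set.mem_ofPred_eq, and_assoc]
  rw [hgen, mem_span_edgeMonomials_iff, mem_span_edgeMonomials_iff]
  refine forall₂_congr fun m hm => ⟨fun ⟨e, he, hle⟩ => ⟨e, he.1, hle⟩, fun ⟨e, he, hle⟩ => ?_⟩
  have hea := hle.trans (hp m hm)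
  have h₁ := hea e.1
  have h₂ := hea e.2
  simp only [Finsupp.add_apply, Finsupp.single_eq_same] at h₁ h₂
  exact ⟨e, ⟨he, ha _ (by omega), ha _ (by have := hw e.2; omega)⟩, hle⟩

end EdgeIdeals

theorem stmt19_general {K : Type} [Field K] {V : Type}
    (E : Set (V × V))
    (w : V → ℕ) (hw : ∀ v, 1 ≤ w v) (W : Set V)
    (ID IH : Ideal (MvPolynomial V K))
    (hID : ID = Ideal.span {p | ∃ e ∈ E, p = X e.1 * X e.2 ^ w e.2})
    (hIH : IH = Ideal.span {p | ∃ e ∈ E, e.1 ∈ W ∧ e.2 ∈ W ∧ p = X e.1 * X e.2 ^ w e.2})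
    (a : V →₀ ℕ) (ha : ∀ v, a v ≠ 0 → v ∈ W)
    (FH : MinFreeRes IH) (FD : MinFreeRes ID) :
    ∀ i, FH.cnt i a = FD.cnt i a := by
  subst hID hIH
  exact MinFreeRes.cnt_eq_of_agreeBelow FH FD (agreeBelow_span_induced_edges E hw ha)

/-- Let `D` be a weighted oriented graph with vertex set `V`, directed edge set
`E ⊆ V × V` and weights `w : V → ℕ+`, and let `H = D_W` be the induced subgraph on
`W ⊆ V`.  For their edge ideals `I(H), I(D) ⊆ K[x_v : v ∈ V]` and any multidegree
`a` with `supp a ⊆ W`, one has `β_{i,a}(I(H)) = β_{i,a}(I(D))` for all `i ≥ 0`. -/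
theorem stmt19 {K : Type} [Field K] {V : Type}
    (E : Set (V × V)) (hirrefl : ∀ e ∈ E, e.1 ≠ e.2)
    (w : V → ℕ) (hw : ∀ v, 1 ≤ w v) (W : Set V)
    (ID IH : Ideal (MvPolynomial V K))
    (hID : ID = Ideal.span {p | ∃ e ∈ E, p = X e.1 * X e.2 ^ w e.2})
    (hIH : IH = Ideal.span {p | ∃ e ∈ E, e.1 ∈ W ∧ e.2 ∈ W ∧ p = X e.1 * X e.2 ^ w e.2})
    (a : V →₀ ℕ) (ha : ∀ v, a v ≠ 0 → v ∈ W)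
    (FH : MinFreeRes IH) (FD : MinFreeRes ID) :
    ∀ i, FH.cnt i a = FD.cnt i a :=
  stmt19_general E w hw W ID IH hID hIH a ha FH FD
end
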